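/- Let α : Fin m → ℝ be nonnegative weights with ∑_j α_j = 1 and let p : Fin m → [0,1]. Set z := ∑_j α_j · 2√(p_j(1−p_j)). Then z·√(2 − z²) ≤ ∑_{j,k} α_j α_k · 2√((p_j⋆p_k)(1−(p_j⋆p_k))) ≤ 2z − z². (This is the statement that for any BMS channel W with z = Z(W), one has z√(2−z²) ≤ Z(W Ｓ W) ≤ 2z − z².) -/

import Mathlib

/-!
Put `x_j := Z(BSC(p_j))`. Then `Z(BSC(p_j ⋆ p_k)) = g(x_j, x_k)` with
`g(x, y) := √(x² + y² − x²y²) = √((1 − y²)x² + y²)`, a symmetric function that is convex in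
each variable (the norm of an affine map) and bounded by `x + y − xy` on `[0,1]²`.
Applying Jensen's inequality once in each variable gives
`∑_{j,k} α_j α_k g(x_j, x_k) ≥ g(z, z) = z√(2 − z²)`, while the bound `g ≤ x + y − xy`
sums to `2z − z²`.
-/

/-- The serial-combination crossover probability `p⋆q := p(1−q) + (1−p)q`. -/
def serial (p q : ℝ) : ℝ := p * (1 - q) + (1 - p) * q

/-- The Bhattacharyya parameter of `BSC(p)`, namely `Z(BSC(p)) := 2√(p(1−p))`. -/
noncomputable def bhat (p : ℝ) : ℝ := 2 * Real.sqrt (p * (1 - p))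

open Real Set Complex Finset

lemma convexOn_sqrt_mul_sq_add {a b : ℝ} (ha : 0 ≤ a) (hb : 0 ≤ b) :
    ConvexOn ℝ univ fun x : ℝ => √(a * x ^ 2 + b) := by
  have h : ConvexOn ℝ univ
      ((‖·‖) ∘ AffineMap.lineMap (k := ℝ) ((√b : ℂ) * I) ((√a : ℂ) + (√b : ℂ) * I)) :=
    (convexOn_norm convex_univ).comp_affineMap _
  refine h.congr fun x _ => ?_
  rw [Function.comp_apply, AffineMap.lineMap_apply_module,
    show (1 - x) • ((√b : ℂ) * I) + x • ((√a : ℂ) + √b * I) = ((x * √a : ℝ) : ℂ) + (√b : ℝ) * I by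
      simp only [Complex.real_smul]; push_cast; ring,
    norm_add_mul_I, mul_pow, sq_sqrt ha, sq_sqrt hb, mul_comm]

lemma bhat_nonneg (p : ℝ) : 0 ≤ bhat p := by
  unfold bhat; positivity

lemma bhat_sq {p : ℝ} (hp : p ∈ Icc (0 : ℝ) 1) : bhat p ^ 2 = 4 * (p * (1 - p)) := by
  rw [bhat, mul_pow, sq_sqrt (mul_nonneg hp.1 (sub_nonneg.2 hp.2))]
  norm_num

lemma bhat_le_one {p : ℝ} (hp : p ∈ Icc (0 : ℝ) 1) : bhat p ≤ 1 := by
  have h := bhat_sq hp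
  nlinarith [sq_nonneg (2 * p - 1), bhat_nonneg p]

/-- `Z(BSC(p ⋆ q))` as a function of `x = Z(BSC(p))` and `y = Z(BSC(q))`. -/
noncomputable def serialBhat (x y : ℝ) : ℝ := √(x ^ 2 + y ^ 2 - x ^ 2 * y ^ 2)

lemma serialBhat_comm (x y : ℝ) : serialBhat x y = serialBhat y x := by
  unfold serialBhat; ring_nf

lemma bhat_serial {p q : ℝ} (hp : p ∈ Icc (0 : ℝ) 1) (hq : q ∈ Icc (0 : ℝ) 1) :
    bhat (serial p q) = serialBhat (bhat p) (bhat q) := by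
  rw [serialBhat, bhat_sq hp, bhat_sq hq, bhat,
    show 2 * √(serial p q * (1 - serial p q)) = √(2 ^ 2 * (serial p q * (1 - serial p q))) by
      rw [sqrt_mul (sq_nonneg 2), sqrt_sq zero_le_two]]
  congr 1
  unfold serial
  ring

lemma serialBhat_self {z : ℝ} (hz : 0 ≤ z) : serialBhat z z = z * √(2 - z ^ 2) := by
  rw [serialBhat, show z ^ 2 + z ^ 2 - z ^ 2 * z ^ 2 = z ^ 2 * (2 - z ^ 2) by ring,
    sqrt_mul (sq_nonneg z), sqrt_sq hz]

lemma serialBhat_le {x y : ℝ} (hx : x ∈ Icc (0 : ℝ) 1) (hy : y ∈ Icc (0 : ℝ) 1) :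
    serialBhat x y ≤ x + y - x * y := by
  obtain ⟨hx0, hx1⟩ := hx
  obtain ⟨hy0, hy1⟩ := hy
  refine sqrt_le_iff.2 ⟨by nlinarith, ?_⟩
  nlinarith [mul_nonneg (mul_nonneg hx0 hy0) (mul_nonneg (sub_nonneg.2 hx1) (sub_nonneg.2 hy1))]

lemma convexOn_serialBhat_left {y : ℝ} (hy : y ^ 2 ≤ 1) : ConvexOn ℝ univ (serialBhat · y) :=
  (convexOn_sqrt_mul_sq_add (sub_nonneg.2 hy) (sq_nonneg y)).congr fun x _ => by
    rw [serialBhat]; ring_nf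

section Mixture

variable {ι : Type*} (s : Finset ι) {α x : ι → ℝ}

lemma serialBhat_sum_le (hα : ∀ j ∈ s, 0 ≤ α j) (hαsum : ∑ j ∈ s, α j = 1) {y : ℝ}
    (hy : y ^ 2 ≤ 1) :
    serialBhat (∑ j ∈ s, α j * x j) y ≤ ∑ j ∈ s, α j * serialBhat (x j) y := by
  simpa only [smul_eq_mul] using (convexOn_serialBhat_left hy).map_sum_le hα hαsum (by simp)

lemma sum_sum_mul_mul_add_sub_mul (hαsum : ∑ j ∈ s, α j = 1) :
    ∑ j ∈ s, ∑ k ∈ s, α j * α k * (x j + x k - x j * x k) =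
      2 * ∑ j ∈ s, α j * x j - (∑ j ∈ s, α j * x j) ^ 2 := by
  have expand : ∑ j ∈ s, ∑ k ∈ s, α j * α k * (x j + x k - x j * x k) =
      (∑ j ∈ s, α j * x j) * (∑ k ∈ s, α k) + (∑ j ∈ s, α j) * (∑ k ∈ s, α k * x k) -
        (∑ j ∈ s, α j * x j) * (∑ k ∈ s, α k * x k) := by
    simp only [sum_mul_sum, ← sum_add_distrib, ← sum_sub_distrib]
    exact sum_congr rfl fun j _ => sum_congr rfl fun k _ => by ring
  rw [expand, hαsum]
  ring

end Mixture

/-- For a BMS channel `W` with BSC-decomposition `∑ α_j BSC(p_j)` and `z := Z(W)`,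
one has `z√(2−z²) ≤ Z(W Ｓ W) ≤ 2z − z²`. -/
theorem stmt_6 (m : ℕ) (α : Fin m → ℝ) (hα : ∀ j, 0 ≤ α j) (hαsum : ∑ j, α j = 1)
    (p : Fin m → ℝ) (hp : ∀ j, p j ∈ Set.Icc (0 : ℝ) 1)
    (z : ℝ) (hz : z = ∑ j, α j * bhat (p j)) :
    z * Real.sqrt (2 - z ^ 2) ≤ ∑ j, ∑ k, α j * α k * bhat (serial (p j) (p k)) ∧
    ∑ j, ∑ k, α j * α k * bhat (serial (p j) (p k)) ≤ 2 * z - z ^ 2 := by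
  set x := fun j => bhat (p j)
  have hx : ∀ j, x j ∈ Icc (0 : ℝ) 1 := fun j => ⟨bhat_nonneg _, bhat_le_one (hp j)⟩
  have hz01 : z ∈ Icc (0 : ℝ) 1 := by
    rw [hz, ← hαsum]
    exact ⟨sum_nonneg fun j _ => mul_nonneg (hα j) (hx j).1,
      sum_le_sum fun j _ => mul_le_of_le_one_right (hα j) (hx j).2⟩
  have hsq : ∀ {y : ℝ}, y ∈ Icc (0 : ℝ) 1 → y ^ 2 ≤ 1 := fun hy => pow_le_one₀ hy.1 hy.2
  have hZ : ∀ j k, bhat (serial (p j) (p k)) = serialBhat (x j) (x k) :=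
    fun j k => bhat_serial (hp j) (hp k)
  simp only [hZ]
  constructor
  · calc z * √(2 - z ^ 2) = serialBhat z z := (serialBhat_self hz01.1).symm
      _ ≤ ∑ j, α j * serialBhat (x j) z := by
          conv_lhs => arg 1; rw [hz]
          exact serialBhat_sum_le _ (fun j _ => hα j) hαsum (hsq hz01)
      _ ≤ ∑ j, α j * ∑ k, α k * serialBhat (x k) (x j) := by
          refine sum_le_sum fun j _ => mul_le_mul_of_nonneg_left ?_ (hα j)
          rw [serialBhat_comm, hz]
          exact serialBhat_sum_le _ (fun k _ => hα k) hαsum (hsq (hx j))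
      _ = ∑ j, ∑ k, α j * α k * serialBhat (x j) (x k) := by
          simp only [mul_sum, serialBhat_comm (x _) (x _), mul_assoc]
  · calc ∑ j, ∑ k, α j * α k * serialBhat (x j) (x k)
        ≤ ∑ j, ∑ k, α j * α k * (x j + x k - x j * x k) :=
          sum_le_sum fun j _ => sum_le_sum fun k _ =>
            mul_le_mul_of_nonneg_left (serialBhat_le (hx j) (hx k)) (mul_nonneg (hα j) (hα k))
      _ = 2 * z - z ^ 2 := by rw [sum_sum_mul_mul_add_sub_mul _ hαsum, hz]
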